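/- Let m, n ∈ ℤ. If m + nφ ∈ C#, then m is odd and n is even. If m + nφ ∈ C ∖ C#, then m is even. -/

import Mathlib

/-!
Write the points of `C` as `∑ aₖ ρᵏ` with digits `aₖ ∈ {0, 4 - 2φ, 2φ - 2}` and `ρ = φ⁻³ = 2φ - 3`.
The three pieces `d + ρC` are separated by gaps of length at least `5φ - 8`, so digit sequences
are ordered lexicographically, and a point of `C` bounds a complementary interval exactly when its
digits are eventually `0` or eventually `2φ - 2`.

If `x = m + nφ`, the tails `z_K = ∑ a_{K+k} ρᵏ` satisfy `z_{K+1} = φ³ (z_K - a_K)`. As `φ³ = 1 + 2φ`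
and every digit lies in `2ℤ[φ]`, all `z_K` lie in `x + 2ℤ[φ]`; as `(1 - φ)³ = -ρ`, their Galois
conjugates are eventually bounded by `φ + 1/2`. The only elements of `ℤ[φ] ∩ [0, φ]` with such a
conjugate are `0`, `1`, `φ - 1` and `φ`. Here `φ - 1` lies in a gap, `z_K ∈ {0, φ}` makes the digits
eventually extreme (and then `m` is even), and `z_K = 1` makes `m` odd and `n` even.
-/

open Set

noncomputable section

/-- The golden ratio `(1+√5)/2`. -/
def gold : ℝ := (1 + Real.sqrt 5) / 2

/-- The Cantor set `C`: sums `Σ a_k φ^(-3k)` with digits `a_k ∈ {0, 4-2φ, 2φ-2}`. -/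
def cantorC : Set ℝ :=
  {x | ∃ a : ℕ → ℝ, (∀ k, a k = 0 ∨ a k = 4 - 2 * gold ∨ a k = 2 * gold - 2) ∧
    x = ∑' k : ℕ, a k * (gold ^ (3 * k))⁻¹}

/-- The endpoints of the connected components of `ℝ ∖ C`. -/
def cantorEndpoints : Set ℝ :=
  {x | ∃ y : ℝ, y ∉ cantorC ∧ x ∈ closure (connectedComponentIn cantorCᶜ y)}

/-- `C♯`: the Cantor set minus the endpoints of complementary components. -/
def cantorCsharp : Set ℝ := cantorC \ cantorEndpoints

open Filter Function

lemma gold_sq : gold ^ 2 = gold + 1 := Real.goldenRatio_sq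

lemma gold_bounds : 1.6 < gold ∧ gold < 1.62 := by
  have : 1 < gold := Real.one_lt_goldenRatio
  constructor <;> nlinarith [gold_sq]

def cantorRatio : ℝ := 2 * gold - 3

local notation "ρ" => cantorRatio

lemma cantorRatio_pos : 0 < ρ := by unfold cantorRatio; linarith [gold_bounds.1]

lemma cantorRatio_lt_one : ρ < 1 := by unfold cantorRatio; linarith [gold_bounds.2]

lemma gold_pow_three_mul_cantorRatio : gold ^ 3 * ρ = 1 := by
  unfold cantorRatio; linear_combination (2 * gold ^ 2 - gold + 1) * gold_sq

lemma inv_gold_pow_three_mul (k : ℕ) : (gold ^ (3 * k))⁻¹ = ρ ^ k := by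
  rw [pow_mul, ← inv_pow, inv_eq_of_mul_eq_one_right gold_pow_three_mul_cantorRatio]

lemma eventually_mul_cantorRatio_pow_lt (c : ℝ) {ε : ℝ} (hε : 0 < ε) :
    ∀ᶠ k in atTop, c * ρ ^ k < ε := by
  have := (tendsto_pow_atTop_nhds_zero_of_lt_one cantorRatio_pos.le cantorRatio_lt_one).const_mul c
  rw [mul_zero] at this
  exact this.eventually (gt_mem_nhds hε)

def cantorDigits : Set ℝ := {0, 4 - 2 * gold, 2 * gold - 2}

section Digits

variable {d e : ℝ}

lemma nonneg_of_mem_cantorDigits (hd : d ∈ cantorDigits) : 0 ≤ d := by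
  rcases hd with rfl | rfl | rfl <;> linarith [gold_bounds.2, gold_bounds.1]

lemma le_of_mem_cantorDigits (hd : d ∈ cantorDigits) : d ≤ 2 * gold - 2 := by
  rcases hd with rfl | rfl | rfl <;> linarith [gold_bounds.2, gold_bounds.1]

lemma add_le_of_mem_cantorDigits (hd : d ∈ cantorDigits) (he : e ∈ cantorDigits) (h : d < e) :
    d + (4 * gold - 6) ≤ e := by
  rcases hd with rfl | rfl | rfl <;> rcases he with rfl | rfl | rfl <;>
    linarith [gold_bounds.1, gold_bounds.2]

lemma exists_int_of_mem_cantorDigits (hd : d ∈ cantorDigits) :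
    ∃ p q : ℤ, d = p + q * gold ∧ Even p ∧ Even q ∧ |(p : ℝ) + q * (1 - gold)| ≤ 2 + 2 * gold := by
  have := gold_bounds.1
  rcases hd with rfl | rfl | rfl
  · exact ⟨0, 0, by simp, by decide, by decide, by simp; linarith⟩
  · refine ⟨4, -2, by push_cast; ring, by decide, by decide, le_of_eq ?_⟩
    rw [abs_of_nonneg] <;> push_cast <;> linarith
  · refine ⟨-2, 2, by push_cast; ring, by decide, by decide, ?_⟩
    rw [abs_le]; push_cast; constructor <;> linarith

end Digits

def cantorSum (a : ℕ → ℝ) : ℝ := ∑' k, a k * ρ ^ k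

section CantorSum

variable {a : ℕ → ℝ}

lemma mem_cantorC_iff {x : ℝ} :
    x ∈ cantorC ↔ ∃ a : ℕ → ℝ, (∀ k, a k ∈ cantorDigits) ∧ cantorSum a = x := by
  simp only [cantorC, mem_ofPred_eq, inv_gold_pow_three_mul]
  exact exists_congr fun a => and_congr Iff.rfl eq_comm

lemma summable_cantorSum (ha : ∀ k, a k ∈ cantorDigits) : Summable fun k => a k * ρ ^ k :=
  .of_nonneg_of_le
    (fun k => mul_nonneg (nonneg_of_mem_cantorDigits (ha k)) (pow_nonneg cantorRatio_pos.le k))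
    (fun k => mul_le_mul_of_nonneg_right (le_of_mem_cantorDigits (ha k))
      (pow_nonneg cantorRatio_pos.le k))
    ((summable_geometric_of_lt_one cantorRatio_pos.le cantorRatio_lt_one).mul_left _)

lemma cantorSum_nonneg (ha : ∀ k, a k ∈ cantorDigits) : 0 ≤ cantorSum a :=
  tsum_nonneg fun k =>
    mul_nonneg (nonneg_of_mem_cantorDigits (ha k)) (pow_nonneg cantorRatio_pos.le k)

lemma cantorSum_const_max : cantorSum (fun _ => 2 * gold - 2) = gold := by
  rw [cantorSum, tsum_mul_left, tsum_geometric_of_lt_one cantorRatio_pos.le cantorRatio_lt_one,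
    mul_inv_eq_iff_eq_mul₀ (sub_pos.2 cantorRatio_lt_one).ne']
  unfold cantorRatio
  linear_combination 2 * gold_sq

lemma gold_sub_cantorSum (ha : ∀ k, a k ∈ cantorDigits) :
    gold - cantorSum a = ∑' k, (2 * gold - 2 - a k) * ρ ^ k := by
  calc gold - cantorSum a = cantorSum (fun _ => 2 * gold - 2) - cantorSum a := by
        rw [cantorSum_const_max]
    _ = _ := by
      rw [cantorSum, cantorSum, ← Summable.tsum_sub
        (summable_cantorSum fun _ => Or.inr (Or.inr rfl)) (summable_cantorSum ha)]
      simp_rw [sub_mul]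

lemma cantorSum_le_gold (ha : ∀ k, a k ∈ cantorDigits) : cantorSum a ≤ gold := by
  have : 0 ≤ ∑' k, (2 * gold - 2 - a k) * ρ ^ k := tsum_nonneg fun k =>
    mul_nonneg (sub_nonneg.2 (le_of_mem_cantorDigits (ha k))) (pow_nonneg cantorRatio_pos.le k)
  linarith [gold_sub_cantorSum ha]

lemma eq_zero_of_cantorSum_eq_zero (ha : ∀ k, a k ∈ cantorDigits) (h : cantorSum a = 0) (k : ℕ) :
    a k = 0 := by
  have hs := (summable_cantorSum ha).hasSum
  rw [← cantorSum, h, hasSum_zero_iff_of_nonneg fun k =>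
    mul_nonneg (nonneg_of_mem_cantorDigits (ha k)) (pow_nonneg cantorRatio_pos.le k)] at hs
  exact (mul_eq_zero.1 (congrFun hs k)).resolve_right (pow_ne_zero k cantorRatio_pos.ne')

lemma eq_max_of_cantorSum_eq_gold (ha : ∀ k, a k ∈ cantorDigits) (h : cantorSum a = gold)
    (k : ℕ) : a k = 2 * gold - 2 := by
  have hs : Summable fun k => (2 * gold - 2 - a k) * ρ ^ k := by
    simpa only [sub_mul] using
      (summable_cantorSum fun _ => Or.inr (Or.inr rfl)).sub (summable_cantorSum ha)
  have h0 := hs.hasSum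
  rw [← gold_sub_cantorSum ha, h, sub_self, hasSum_zero_iff_of_nonneg fun k =>
    mul_nonneg (sub_nonneg.2 (le_of_mem_cantorDigits (ha k))) (pow_nonneg cantorRatio_pos.le k)]
    at h0
  have := (mul_eq_zero.1 (congrFun h0 k)).resolve_right (pow_ne_zero k cantorRatio_pos.ne')
  linarith

lemma cantorSum_eq_head_add (ha : ∀ k, a k ∈ cantorDigits) :
    cantorSum a = a 0 + ρ * cantorSum (fun k => a (k + 1)) := by
  rw [cantorSum, (summable_cantorSum ha).tsum_eq_zero_add, cantorSum, ← tsum_mul_left]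
  simp only [pow_zero, mul_one, pow_succ]
  congr 1
  exact tsum_congr fun k => by ring

lemma cantorSum_update (ha : ∀ k, a k ∈ cantorDigits) (k : ℕ) (c : ℝ) :
    cantorSum (update a k c) = cantorSum a + (c - a k) * ρ ^ k := by
  have h : (fun j => update a k c j * ρ ^ j) = update (fun j => a j * ρ ^ j) k (c * ρ ^ k) := by
    ext j
    rcases eq_or_ne j k with rfl | hj <;> simp [*]
  rw [cantorSum, h, ((summable_cantorSum ha).hasSum.update k _).tsum_eq, cantorSum]
  ring

lemma gold_sub_one_not_mem_cantorC : gold - 1 ∉ cantorC := by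
  intro hx
  obtain ⟨a, ha, hx⟩ := mem_cantorC_iff.1 hx
  have h1 := cantorSum_le_gold fun k => ha (k + 1)
  have h2 := cantorSum_nonneg fun k => ha (k + 1)
  rw [cantorSum_eq_head_add ha] at hx
  have := gold_bounds
  rcases ha 0 with h | h | h <;> rw [h] at hx <;> unfold cantorRatio at hx <;>
    nlinarith [gold_sq]

end CantorSum

section Separation

variable {a b : ℕ → ℝ}

-- `5φ - 8 = (4φ - 6) - ρφ`: the least distance between two digits minus the diameter of `ρC`.
lemma cantorSum_add_le_of_lex (ha : ∀ k, a k ∈ cantorDigits) (hb : ∀ k, b k ∈ cantorDigits)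
    {i : ℕ} (heq : ∀ k < i, a k = b k) (hlt : a i < b i) :
    cantorSum a + (5 * gold - 8) * ρ ^ i ≤ cantorSum b := by
  induction i generalizing a b with
  | zero =>
    have h1 := cantorSum_le_gold fun k => ha (k + 1)
    have h2 := cantorSum_nonneg fun k => hb (k + 1)
    have h3 := add_le_of_mem_cantorDigits (ha 0) (hb 0) hlt
    rw [cantorSum_eq_head_add ha, cantorSum_eq_head_add hb]
    unfold cantorRatio at *
    nlinarith [gold_bounds.1, gold_sq]
  | succ i ih =>
    have := ih (fun k => ha (k + 1)) (fun k => hb (k + 1)) (fun k hk => heq (k + 1) (by omega)) hlt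
    rw [cantorSum_eq_head_add ha, cantorSum_eq_head_add hb, heq 0 (Nat.succ_pos i), pow_succ']
    nlinarith [cantorRatio_pos]

lemma exists_add_le_of_cantorSum_lt (ha : ∀ k, a k ∈ cantorDigits) (hb : ∀ k, b k ∈ cantorDigits)
    (h : cantorSum a < cantorSum b) :
    ∃ i, a i < b i ∧ cantorSum a + (5 * gold - 8) * ρ ^ i ≤ cantorSum b := by
  have hne : ∃ i, a i ≠ b i := by
    by_contra! hab
    exact h.ne (congrArg cantorSum (funext hab))
  classical
  let i := Nat.find hne
  have heq : ∀ k < i, a k = b k := fun k hk => not_not.1 (Nat.find_min hne hk)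
  rcases (Nat.find_spec hne).lt_or_gt with hlt | hgt
  · exact ⟨i, hlt, cantorSum_add_le_of_lex ha hb heq hlt⟩
  · have := cantorSum_add_le_of_lex hb ha (fun k hk => (heq k hk).symm) hgt
    have : 0 < (5 * gold - 8) * ρ ^ i :=
      mul_pos (by linarith [gold_bounds.1]) (pow_pos cantorRatio_pos i)
    linarith

end Separation

section Gaps

variable {a : ℕ → ℝ}

lemma Ioo_subset_compl_of_eq_zero (ha : ∀ k, a k ∈ cantorDigits) {K : ℕ} (h : ∀ k ≥ K, a k = 0) :
    Ioo (cantorSum a - (5 * gold - 8) * ρ ^ K) (cantorSum a) ⊆ cantorCᶜ := by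
  rintro y ⟨hy₁, hy₂⟩ hy
  obtain ⟨b, hb, rfl⟩ := mem_cantorC_iff.1 hy
  obtain ⟨i, hlt, hle⟩ := exists_add_le_of_cantorSum_lt hb ha hy₂
  have hiK : i < K := by
    by_contra! hiK
    linarith [h i hiK, nonneg_of_mem_cantorDigits (hb i)]
  have := pow_le_pow_of_le_one cantorRatio_pos.le cantorRatio_lt_one.le hiK.le
  nlinarith [gold_bounds.1]

lemma Ioo_subset_compl_of_eq_max (ha : ∀ k, a k ∈ cantorDigits) {K : ℕ}
    (h : ∀ k ≥ K, a k = 2 * gold - 2) :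
    Ioo (cantorSum a) (cantorSum a + (5 * gold - 8) * ρ ^ K) ⊆ cantorCᶜ := by
  rintro y ⟨hy₁, hy₂⟩ hy
  obtain ⟨b, hb, rfl⟩ := mem_cantorC_iff.1 hy
  obtain ⟨i, hlt, hle⟩ := exists_add_le_of_cantorSum_lt ha hb hy₁
  have hiK : i < K := by
    by_contra! hiK
    linarith [h i hiK, le_of_mem_cantorDigits (hb i)]
  have := pow_le_pow_of_le_one cantorRatio_pos.le cantorRatio_lt_one.le hiK.le
  nlinarith [gold_bounds.1]

lemma update_mem_cantorDigits (ha : ∀ k, a k ∈ cantorDigits) {c : ℝ} (hc : c ∈ cantorDigits)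
    (k : ℕ) : ∀ j, update a k c j ∈ cantorDigits :=
  (forall_update_iff a fun _ d => d ∈ cantorDigits).2 ⟨hc, fun j _ => ha j⟩

lemma eventually_eq_zero_of_Ioo_subset_compl (ha : ∀ k, a k ∈ cantorDigits) {ε : ℝ} (hε : 0 < ε)
    (h : Ioo (cantorSum a - ε) (cantorSum a) ⊆ cantorCᶜ) : ∀ᶠ k in atTop, a k = 0 := by
  filter_upwards [eventually_mul_cantorRatio_pow_lt (2 * gold - 2) hε] with k hk
  by_contra hne
  have hpos : 0 < a k * ρ ^ k :=
    mul_pos ((nonneg_of_mem_cantorDigits (ha k)).lt_of_ne' hne) (pow_pos cantorRatio_pos k)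
  have hle : a k * ρ ^ k ≤ (2 * gold - 2) * ρ ^ k :=
    mul_le_mul_of_nonneg_right (le_of_mem_cantorDigits (ha k)) (pow_nonneg cantorRatio_pos.le k)
  refine h ?_ (mem_cantorC_iff.2 ⟨_, update_mem_cantorDigits ha (Or.inl rfl) k, rfl⟩)
  rw [cantorSum_update ha]
  constructor <;> linarith

lemma eventually_eq_max_of_Ioo_subset_compl (ha : ∀ k, a k ∈ cantorDigits) {ε : ℝ} (hε : 0 < ε)
    (h : Ioo (cantorSum a) (cantorSum a + ε) ⊆ cantorCᶜ) :
    ∀ᶠ k in atTop, a k = 2 * gold - 2 := by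
  filter_upwards [eventually_mul_cantorRatio_pow_lt (2 * gold - 2) hε] with k hk
  by_contra hne
  have hpos : 0 < (2 * gold - 2 - a k) * ρ ^ k :=
    mul_pos (sub_pos.2 ((le_of_mem_cantorDigits (ha k)).lt_of_ne hne)) (pow_pos cantorRatio_pos k)
  have hle : (2 * gold - 2 - a k) * ρ ^ k ≤ (2 * gold - 2) * ρ ^ k :=
    mul_le_mul_of_nonneg_right (by linarith [nonneg_of_mem_cantorDigits (ha k)])
      (pow_nonneg cantorRatio_pos.le k)
  refine h ?_ (mem_cantorC_iff.2 ⟨_, update_mem_cantorDigits ha (Or.inr (Or.inr rfl)) k, rfl⟩)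
  rw [cantorSum_update ha]
  constructor <;> linarith

end Gaps

theorem Set.OrdConnected.Ioo_subset_of_mem_closure {α : Type*} [LinearOrder α]
    [TopologicalSpace α] [OrderTopology α] {s : Set α} (hs : s.OrdConnected) {x y : α}
    (hy : y ∈ s) (hx : x ∈ closure s) : Ioo y x ⊆ s ∧ Ioo x y ⊆ s := by
  constructor
  · rintro z ⟨hyz, hzx⟩
    obtain ⟨r, hzr, hr⟩ := mem_closure_iff.1 hx (Ioi z) isOpen_Ioi hzx
    exact hs.out hy hr ⟨hyz.le, le_of_lt hzr⟩
  · rintro z ⟨hxz, hzy⟩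
    obtain ⟨r, hrz, hr⟩ := mem_closure_iff.1 hx (Iio z) isOpen_Iio hxz
    exact hs.out hr hy ⟨le_of_lt hrz, hzy.le⟩

lemma mem_cantorEndpoints_of_Ioo_subset_compl {u v x : ℝ} (huv : u < v)
    (h : Ioo u v ⊆ cantorCᶜ) (hx : x ∈ Icc u v) : x ∈ cantorEndpoints := by
  obtain ⟨y, hy⟩ := nonempty_Ioo.2 huv
  refine ⟨y, h hy, closure_mono (isPreconnected_Ioo.subset_connectedComponentIn hy h) ?_⟩
  rwa [closure_Ioo huv.ne]

lemma exists_Ioo_subset_compl_of_mem_cantorEndpoints {x : ℝ} (hx : x ∈ cantorC)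
    (he : x ∈ cantorEndpoints) :
    ∃ ε > 0, Ioo (x - ε) x ⊆ cantorCᶜ ∨ Ioo x (x + ε) ⊆ cantorCᶜ := by
  obtain ⟨y, hy, hcl⟩ := he
  obtain ⟨hyx, hxy⟩ := isPreconnected_connectedComponentIn.ordConnected.Ioo_subset_of_mem_closure
    (mem_connectedComponentIn hy) hcl
  have hsub := connectedComponentIn_subset cantorCᶜ y
  rcases (show y ≠ x by rintro rfl; exact hy hx).lt_or_gt with hlt | hgt
  · exact ⟨x - y, sub_pos.2 hlt, .inl (by rw [sub_sub_cancel]; exact hyx.trans hsub)⟩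
  · exact ⟨y - x, sub_pos.2 hgt, .inr (by rw [add_sub_cancel]; exact hxy.trans hsub)⟩

lemma cantorSum_mem_cantorEndpoints_iff {a : ℕ → ℝ} (ha : ∀ k, a k ∈ cantorDigits) :
    cantorSum a ∈ cantorEndpoints ↔
      (∀ᶠ k in atTop, a k = 0) ∨ ∀ᶠ k in atTop, a k = 2 * gold - 2 := by
  constructor
  · intro he
    obtain ⟨ε, hε, hl | hr⟩ :=
      exists_Ioo_subset_compl_of_mem_cantorEndpoints (mem_cantorC_iff.2 ⟨a, ha, rfl⟩) he
    · exact .inl (eventually_eq_zero_of_Ioo_subset_compl ha hε hl)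
    · exact .inr (eventually_eq_max_of_Ioo_subset_compl ha hε hr)
  · have hgap (K : ℕ) : 0 < (5 * gold - 8) * ρ ^ K :=
      mul_pos (by linarith [gold_bounds.1]) (pow_pos cantorRatio_pos K)
    rintro (h | h) <;> obtain ⟨K, hK⟩ := eventually_atTop.1 h
    · exact mem_cantorEndpoints_of_Ioo_subset_compl (sub_lt_self _ (hgap K))
        (Ioo_subset_compl_of_eq_zero ha hK) (right_mem_Icc.2 (sub_lt_self _ (hgap K)).le)
    · exact mem_cantorEndpoints_of_Ioo_subset_compl (lt_add_of_pos_right _ (hgap K))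
        (Ioo_subset_compl_of_eq_max ha hK) (left_mem_Icc.2 (lt_add_of_pos_right _ (hgap K)).le)

lemma int_add_int_mul_gold_inj {m n p q : ℤ} (h : (m : ℝ) + n * gold = p + q * gold) :
    m = p ∧ n = q := by
  obtain rfl : n = q := by
    by_contra hne
    have : ((n - q : ℤ) : ℝ) * gold = ((p - m : ℤ) : ℤ) := by push_cast; linarith
    exact (Real.goldenRatio_irrational.intCast_mul (sub_ne_zero.2 hne)).ne_int _ this
  exact ⟨by exact_mod_cast (by linarith : (m : ℝ) = p), rfl⟩

lemma int_add_int_mul_gold_cases {M N : ℤ} (h₀ : 0 ≤ (M : ℝ) + N * gold)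
    (h₁ : (M : ℝ) + N * gold ≤ gold) (hc : |(M : ℝ) + N * (1 - gold)| ≤ gold + 1 / 2) :
    (M = 0 ∧ N = 0) ∨ (M = 1 ∧ N = 0) ∨ (M = -1 ∧ N = 1) ∨ (M = 0 ∧ N = 1) := by
  obtain ⟨hc₁, hc₂⟩ := abs_le.1 hc
  obtain ⟨hg₁, hg₂⟩ := gold_bounds
  have hN₁ : -1 < N := by exact_mod_cast (show (-1 : ℝ) < N by nlinarith)
  have hN₂ : N < 2 := by exact_mod_cast (show (N : ℝ) < 2 by nlinarith)
  have hM₁ : -2 < M := by exact_mod_cast (show (-2 : ℝ) < M by nlinarith)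
  have hM₂ : M < 2 := by exact_mod_cast (show (M : ℝ) < 2 by nlinarith)
  interval_cases N <;> interval_cases M <;> first | decide | (push_cast at h₀ h₁; linarith)

lemma pow_three_mul_int_add_int_mul {t : ℝ} (ht : t ^ 2 = t + 1) (P Q : ℤ) :
    t ^ 3 * (P + Q * t) = ((P + 2 * Q : ℤ) : ℝ) + ((2 * P + 3 * Q : ℤ) : ℝ) * t := by
  push_cast
  linear_combination (P * (t + 1) + Q * (t ^ 2 + t + 2)) * ht

lemma one_sub_gold_sq : (1 - gold) ^ 2 = (1 - gold) + 1 := by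
  linear_combination gold_sq

lemma one_sub_gold_pow_three : (1 - gold) ^ 3 = -ρ := by
  unfold cantorRatio
  linear_combination (2 - gold) * gold_sq

section Orbit

variable {a : ℕ → ℝ}

lemma cantorSum_tail_succ (ha : ∀ k, a k ∈ cantorDigits) (K : ℕ) :
    cantorSum (fun k => a (k + (K + 1))) = gold ^ 3 * (cantorSum (fun k => a (k + K)) - a K) := by
  have h := cantorSum_eq_head_add fun k => ha (k + K)
  simp only [zero_add, add_right_comm _ 1 K, add_assoc] at h
  rw [h, add_sub_cancel_left, ← mul_assoc, gold_pow_three_mul_cantorRatio, one_mul]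

-- `M + N * (1 - gold)` is the Galois conjugate of the tail; `gold` is the fixed point of the
-- bound `B ↦ ρ (B + 2 + 2φ)` that it obeys.
lemma exists_int_cantorSum_tail (ha : ∀ k, a k ∈ cantorDigits) {m n : ℤ}
    (hx : cantorSum a = m + n * gold) (K : ℕ) :
    ∃ M N : ℤ, cantorSum (fun k => a (k + K)) = M + N * gold ∧ M ≡ m [ZMOD 2] ∧ N ≡ n [ZMOD 2] ∧
      |(M : ℝ) + N * (1 - gold)| ≤ gold + ρ ^ K * |(m : ℝ) + n * (1 - gold)| := by
  induction K with
  | zero => exact ⟨m, n, by simpa using hx, rfl, rfl, by simp; linarith [gold_bounds.1]⟩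
  | succ K ih =>
    obtain ⟨M, N, hz, hM, hN, hc⟩ := ih
    obtain ⟨p, q, hd, ⟨p', rfl⟩, ⟨q', rfl⟩, hpq⟩ := exists_int_of_mem_cantorDigits (ha K)
    have hstep (t : ℝ) (ht : t ^ 2 = t + 1) := pow_three_mul_int_add_int_mul ht
      (M - (p' + p')) (N - (q' + q'))
    refine ⟨M - (p' + p') + 2 * (N - (q' + q')), 2 * (M - (p' + p')) + 3 * (N - (q' + q')),
      ?_, ?_, ?_, ?_⟩
    · rw [cantorSum_tail_succ ha, hz, hd, ← hstep gold gold_sq]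
      push_cast
      ring
    · unfold Int.ModEq at *; omega
    · unfold Int.ModEq at *; omega
    · rw [← hstep _ one_sub_gold_sq, one_sub_gold_pow_three, abs_mul, abs_neg,
        abs_of_pos cantorRatio_pos]
      have hsub : |((M - (p' + p') : ℤ) : ℝ) + ((N - (q' + q') : ℤ) : ℝ) * (1 - gold)| ≤
          |(M : ℝ) + N * (1 - gold)| + (2 + 2 * gold) := by
        have : ((M - (p' + p') : ℤ) : ℝ) + ((N - (q' + q') : ℤ) : ℝ) * (1 - gold) =
            ((M : ℝ) + N * (1 - gold)) -
              (((p' + p' : ℤ) : ℝ) + ((q' + q' : ℤ) : ℝ) * (1 - gold)) := by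
          push_cast
          ring
        rw [this]
        exact (abs_sub _ _).trans (by gcongr)
      calc _ ≤ ρ * (gold + ρ ^ K * |(m : ℝ) + n * (1 - gold)| + (2 + 2 * gold)) :=
            mul_le_mul_of_nonneg_left (by linarith) cantorRatio_pos.le
        _ = gold + ρ ^ (K + 1) * |(m : ℝ) + n * (1 - gold)| := by
            rw [pow_succ]
            unfold cantorRatio
            linear_combination 6 * gold_sq

end Orbit

section Parity

variable {a : ℕ → ℝ}

lemma odd_even_or_eventually_extreme (ha : ∀ k, a k ∈ cantorDigits) {m n : ℤ}
    (hx : cantorSum a = m + n * gold) :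
    (Odd m ∧ Even n) ∨ (∀ᶠ k in atTop, a k = 0) ∨ ∀ᶠ k in atTop, a k = 2 * gold - 2 := by
  obtain ⟨K, hK⟩ :=
    (eventually_mul_cantorRatio_pow_lt |(m : ℝ) + n * (1 - gold)| one_half_pos).exists
  obtain ⟨M, N, hz, hM, hN, hc⟩ := exists_int_cantorSum_tail ha hx K
  have hb (k : ℕ) : a (k + K) ∈ cantorDigits := ha (k + K)
  have h₀ := cantorSum_nonneg hb
  have h₁ := cantorSum_le_gold hb
  rw [hz] at h₀ h₁
  have htail {c : ℝ} (h : ∀ k, a (k + K) = c) : ∀ᶠ k in atTop, a k = c :=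
    eventually_atTop.2 ⟨K, fun k hk => by simpa [Nat.sub_add_cancel hk] using h (k - K)⟩
  rcases int_add_int_mul_gold_cases h₀ h₁ (by linarith) with
    ⟨rfl, rfl⟩ | ⟨rfl, rfl⟩ | ⟨rfl, rfl⟩ | ⟨rfl, rfl⟩
  · exact .inr (.inl (htail (eq_zero_of_cantorSum_eq_zero hb (by simpa using hz))))
  · unfold Int.ModEq at hM hN
    exact .inl ⟨Int.odd_iff.2 (by omega), Int.even_iff.2 (by omega)⟩
  · refine absurd (mem_cantorC_iff.2 ⟨_, hb, hz.trans ?_⟩) gold_sub_one_not_mem_cantorC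
    push_cast
    ring
  · exact .inr (.inr (htail (eq_max_of_cantorSum_eq_gold hb (by simpa using hz))))

lemma even_of_eventually_extreme (ha : ∀ k, a k ∈ cantorDigits) {m n : ℤ}
    (hx : cantorSum a = m + n * gold)
    (h : (∀ᶠ k in atTop, a k = 0) ∨ ∀ᶠ k in atTop, a k = 2 * gold - 2) : Even m := by
  obtain ⟨K, N₀, hK⟩ : ∃ K, ∃ N₀ : ℤ, cantorSum (fun k => a (k + K)) = N₀ * gold := by
    rcases h with h | h <;> obtain ⟨K, hK⟩ := eventually_atTop.1 h
    · refine ⟨K, 0, ?_⟩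
      simp [cantorSum, hK _ (Nat.le_add_left K _)]
    · refine ⟨K, 1, ?_⟩
      simp only [hK _ (Nat.le_add_left K _), cantorSum_const_max, Int.cast_one, one_mul]
  obtain ⟨M, N, hz, hM, -, -⟩ := exists_int_cantorSum_tail ha hx K
  obtain ⟨rfl, -⟩ := int_add_int_mul_gold_inj (p := 0) (q := N₀) <| by
    rw [← hz, hK, Int.cast_zero, zero_add]
  unfold Int.ModEq at hM
  exact Int.even_iff.2 (by omega)

end Parity

/-- If `m + nφ ∈ C♯` then `m` is odd and `n` is even; if `m + nφ ∈ C ∖ C♯` then `m` is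
even. -/
theorem cantor_ring_points (m n : ℤ) :
    ((m : ℝ) + n * gold ∈ cantorCsharp → Odd m ∧ Even n) ∧
    ((m : ℝ) + n * gold ∈ cantorC \ cantorCsharp → Even m) := by
  constructor
  · rintro ⟨hx, hxE⟩
    obtain ⟨a, ha, hsum⟩ := mem_cantorC_iff.1 hx
    rw [← hsum, cantorSum_mem_cantorEndpoints_iff ha] at hxE
    exact (odd_even_or_eventually_extreme ha hsum).resolve_right hxE
  · rintro ⟨hx, hxC⟩
    obtain ⟨a, ha, hsum⟩ := mem_cantorC_iff.1 hx
    have hxE : cantorSum a ∈ cantorEndpoints := by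
      rw [hsum]
      by_contra hxE
      exact hxC ⟨hx, hxE⟩
    exact even_of_eventually_extreme ha hsum ((cantorSum_mem_cantorEndpoints_iff ha).1 hxE)
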